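/- arXiv:1509.06584 — 2 statements merged into one kernel-verified Lean document; each statement's English description precedes it below -/
import Mathlib

section
/- For every ε₃ ∈ (0,1], μ ∈ (0,1], and x ∈ ℝ^n, the truncation error of the Hessian satisfies ‖∇²f(x;μ) − ∇²f̃(x;μ)‖ ≤ 4ε₃/5, where the norm is the operator norm induced by the Euclidean norm on ℝ^n. -/
open Real Filter

noncomputable section

variable {n m : ℕ}

/-- `g_i(x;μ) = √(‖x − c_i‖² + μ²)`. -/
def sebG (c : Fin m → EuclideanSpace ℝ (Fin n)) (μ : ℝ) (x : EuclideanSpace ℝ (Fin n))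
    (i : Fin m) : ℝ :=
  Real.sqrt (‖x - c i‖ ^ 2 + μ ^ 2)

/-- `f_i(x;μ) = g_i(x;μ) + r_i`. -/
def sebFi (c : Fin m → EuclideanSpace ℝ (Fin n)) (r : Fin m → ℝ) (μ : ℝ)
    (x : EuclideanSpace ℝ (Fin n)) (i : Fin m) : ℝ :=
  sebG c μ x i + r i

/-- the log-exponential aggregation function `f(x;μ) = μ ln(Σ_i exp(f_i(x;μ)/μ))`. -/
def sebFmu (c : Fin m → EuclideanSpace ℝ (Fin n)) (r : Fin m → ℝ) (μ : ℝ)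
    (x : EuclideanSpace ℝ (Fin n)) : ℝ :=
  μ * Real.log (∑ i : Fin m, Real.exp (sebFi c r μ x i / μ))

/-- `f(x) = max_i (‖x − c_i‖ + r_i)`. -/
def sebF (c : Fin m → EuclideanSpace ℝ (Fin n)) (r : Fin m → ℝ)
    (x : EuclideanSpace ℝ (Fin n)) : ℝ :=
  ⨆ i : Fin m, (‖x - c i‖ + r i)

/-- `f_∞(x;μ) = max_i f_i(x;μ)`. -/
def sebFinf (c : Fin m → EuclideanSpace ℝ (Fin n)) (r : Fin m → ℝ) (μ : ℝ)
    (x : EuclideanSpace ℝ (Fin n)) : ℝ :=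
  ⨆ i : Fin m, sebFi c r μ x i

/-- `λ_i(x;μ)`. -/
def sebLam (c : Fin m → EuclideanSpace ℝ (Fin n)) (r : Fin m → ℝ) (μ : ℝ)
    (x : EuclideanSpace ℝ (Fin n)) (i : Fin m) : ℝ :=
  Real.exp (sebFi c r μ x i / μ) / ∑ j : Fin m, Real.exp (sebFi c r μ x j / μ)

/-- `∇f_i(x;μ) = (x − c_i)/g_i(x;μ)`. -/
def sebGradI (c : Fin m → EuclideanSpace ℝ (Fin n)) (μ : ℝ)
    (x : EuclideanSpace ℝ (Fin n)) (i : Fin m) : EuclideanSpace ℝ (Fin n) :=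
  (sebG c μ x i)⁻¹ • (x - c i)

/-- `∇f(x;μ) = Σ_i λ_i(x;μ) ∇f_i(x;μ)`. -/
def sebGrad (c : Fin m → EuclideanSpace ℝ (Fin n)) (r : Fin m → ℝ) (μ : ℝ)
    (x : EuclideanSpace ℝ (Fin n)) : EuclideanSpace ℝ (Fin n) :=
  ∑ i : Fin m, sebLam c r μ x i • sebGradI c μ x i

/-- `S(x;μ,ε) = {i : λ_i(x;μ) ≥ ε}`. -/
def sebS (c : Fin m → EuclideanSpace ℝ (Fin n)) (r : Fin m → ℝ) (μ ε : ℝ)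
    (x : EuclideanSpace ℝ (Fin n)) : Finset (Fin m) :=
  Finset.univ.filter (fun i => ε ≤ sebLam c r μ x i)

/-- `λ̃_i(x;μ)`. -/
def sebLamT (c : Fin m → EuclideanSpace ℝ (Fin n)) (r : Fin m → ℝ) (μ ε : ℝ)
    (x : EuclideanSpace ℝ (Fin n)) (i : Fin m) : ℝ :=
  Real.exp (sebFi c r μ x i / μ) / ∑ j ∈ sebS c r μ ε x, Real.exp (sebFi c r μ x j / μ)

/-- the truncated log-exponential function `f̃(x;μ)`. -/
def sebFmuT (c : Fin m → EuclideanSpace ℝ (Fin n)) (r : Fin m → ℝ) (μ ε : ℝ)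
    (x : EuclideanSpace ℝ (Fin n)) : ℝ :=
  μ * Real.log (∑ i ∈ sebS c r μ ε x, Real.exp (sebFi c r μ x i / μ))

/-- `∇f̃(x;μ) = Σ_{i∈S} λ̃_i(x;μ) ∇f_i(x;μ)`. -/
def sebGradT (c : Fin m → EuclideanSpace ℝ (Fin n)) (r : Fin m → ℝ) (μ ε : ℝ)
    (x : EuclideanSpace ℝ (Fin n)) : EuclideanSpace ℝ (Fin n) :=
  ∑ i ∈ sebS c r μ ε x, sebLamT c r μ ε x i • sebGradI c μ x i

/-- `∇²f_i(x;μ) = (1/g_i) I_n − (x−c_i)(x−c_i)ᵀ/g_i³` as an `n×n` matrix. -/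
def sebHessI (c : Fin m → EuclideanSpace ℝ (Fin n)) (μ : ℝ)
    (x : EuclideanSpace ℝ (Fin n)) (i : Fin m) : Matrix (Fin n) (Fin n) ℝ :=
  (sebG c μ x i)⁻¹ • (1 : Matrix (Fin n) (Fin n) ℝ)
    - ((sebG c μ x i) ^ 3)⁻¹ •
        Matrix.vecMulVec (fun j => (x - c i) j) (fun j => (x - c i) j)

/-- `∇²f(x;μ)` as an `n×n` matrix. -/
def sebHess (c : Fin m → EuclideanSpace ℝ (Fin n)) (r : Fin m → ℝ) (μ : ℝ)
    (x : EuclideanSpace ℝ (Fin n)) : Matrix (Fin n) (Fin n) ℝ :=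
  (∑ i : Fin m, (sebLam c r μ x i • sebHessI c μ x i
      + (μ⁻¹ * sebLam c r μ x i) •
          Matrix.vecMulVec (fun j => sebGradI c μ x i j) (fun j => sebGradI c μ x i j)))
    - μ⁻¹ • Matrix.vecMulVec (fun j => sebGrad c r μ x j) (fun j => sebGrad c r μ x j)

/-- `∇²f̃(x;μ)` as an `n×n` matrix. -/
def sebHessT (c : Fin m → EuclideanSpace ℝ (Fin n)) (r : Fin m → ℝ) (μ ε : ℝ)
    (x : EuclideanSpace ℝ (Fin n)) : Matrix (Fin n) (Fin n) ℝ :=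
  (∑ i ∈ sebS c r μ ε x, (sebLamT c r μ ε x i • sebHessI c μ x i
      + (μ⁻¹ * sebLamT c r μ ε x i) •
          Matrix.vecMulVec (fun j => sebGradI c μ x i j) (fun j => sebGradI c μ x i j)))
    - μ⁻¹ • Matrix.vecMulVec (fun j => sebGradT c r μ ε x j) (fun j => sebGradT c r μ ε x j)

end

/-!
Both Hessians are the same expression in the softmax weights,
`H(w) = ∑ wᵢ (∇²fᵢ + μ⁻¹ ∇fᵢ ∇fᵢᵀ) - μ⁻¹ ḡ ḡᵀ` with `ḡ = ∑ wᵢ ∇fᵢ`, evaluated at `λ` and at `λ`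
conditioned on `S`. Since `‖∇fᵢ‖ ≤ 1` and `∇²fᵢ = gᵢ⁻¹ (I - ∇fᵢ ∇fᵢᵀ)` has norm at most
`gᵢ⁻¹ ≤ μ⁻¹`, `H` is `4/μ`-Lipschitz in `w` for the `ℓ¹` distance of probability vectors.
Conditioning on `S` moves `λ` by twice the discarded mass `∑_{i ∉ S} λᵢ ≤ m ε = μ ε₃ / 10`, so the
error is at most `(4/μ) · 2 · μ ε₃ / 10 = 4 ε₃ / 5`.
-/

open Finset InnerProductSpace

section CondWeights

variable {ι : Type*} [DecidableEq ι] {a : ι → ℝ} {s : Finset ι}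

noncomputable def condWeights (a : ι → ℝ) (s : Finset ι) (i : ι) : ℝ :=
  if i ∈ s then a i / ∑ j ∈ s, a j else 0

lemma condWeights_of_mem {i : ι} (hi : i ∈ s) : condWeights a s i = a i / ∑ j ∈ s, a j :=
  if_pos hi

lemma condWeights_of_notMem {i : ι} (hi : i ∉ s) : condWeights a s i = 0 :=
  if_neg hi

lemma condWeights_nonneg (ha : ∀ i, 0 ≤ a i) (s : Finset ι) (i : ι) : 0 ≤ condWeights a s i := by
  unfold condWeights
  split_ifs
  exacts [div_nonneg (ha i) (sum_nonneg fun j _ => ha j), le_rfl]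

variable [Fintype ι]

lemma sum_condWeights (hs : ∑ j ∈ s, a j ≠ 0) : ∑ i, condWeights a s i = 1 := by
  simp only [condWeights]
  rw [sum_ite_mem, univ_inter, ← sum_div, div_self hs]

lemma condWeights_univ_le (ha : ∀ i, 0 ≤ a i) (hs : 0 < ∑ j ∈ s, a j) {i : ι} (hi : i ∈ s) :
    condWeights a univ i ≤ condWeights a s i := by
  rw [condWeights_of_mem (mem_univ i), condWeights_of_mem hi]
  exact div_le_div_of_nonneg_left (ha i) hs
    (sum_le_sum_of_subset_of_nonneg (subset_univ s) fun j _ _ => ha j)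

lemma sum_abs_condWeights_univ_sub (ha : ∀ i, 0 ≤ a i) (hs : 0 < ∑ j ∈ s, a j) :
    ∑ i, |condWeights a univ i - condWeights a s i| = 2 * ∑ i ∈ sᶜ, condWeights a univ i := by
  have hT : ∑ j, a j ≠ 0 := (hs.trans_le
    (sum_le_sum_of_subset_of_nonneg (subset_univ s) fun j _ _ => ha j)).ne'
  have hsplit := sum_add_sum_compl s (condWeights a univ)
  have hs_one : ∑ i ∈ s, condWeights a s i = 1 := by
    rw [sum_congr rfl fun i hi => condWeights_of_mem hi, ← sum_div, div_self hs.ne']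
  have on_s : ∑ i ∈ s, |condWeights a univ i - condWeights a s i|
      = ∑ i ∈ s, (condWeights a s i - condWeights a univ i) :=
    sum_congr rfl fun i hi => by
      rw [abs_sub_comm, abs_of_nonneg (sub_nonneg.2 (condWeights_univ_le ha hs hi))]
  have on_compl : ∑ i ∈ sᶜ, |condWeights a univ i - condWeights a s i|
      = ∑ i ∈ sᶜ, condWeights a univ i :=
    sum_congr rfl fun i hi => by
      rw [condWeights_of_notMem (mem_compl.1 hi), sub_zero,
        abs_of_nonneg (condWeights_nonneg ha _ _)]
  rw [← sum_add_sum_compl s, on_s, on_compl, sum_sub_distrib, hs_one, ← sum_condWeights hT,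
    ← hsplit]
  ring

end CondWeights

section LogSumExpHessian

variable {E : Type*} [NormedAddCommGroup E] [InnerProductSpace ℝ E]

lemma norm_one_sub_rankOne_self_le {u : E} (hu : ‖u‖ ≤ 1) : ‖1 - rankOne ℝ u u‖ ≤ 1 := by
  refine ContinuousLinearMap.opNorm_le_bound _ zero_le_one fun y => ?_
  set t : ℝ := inner ℝ u y
  have hsq : ‖y - t • u‖ ^ 2 ≤ ‖y‖ ^ 2 := by
    have hu2 : ‖u‖ ^ 2 ≤ 1 := by nlinarith [norm_nonneg u]
    rw [norm_sub_sq_real, inner_smul_right, real_inner_comm, norm_smul, Real.norm_eq_abs, mul_pow,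
      sq_abs]
    nlinarith [mul_le_mul_of_nonneg_left hu2 (sq_nonneg t)]
  simpa [t] using (pow_le_pow_iff_left₀ (norm_nonneg _) (norm_nonneg _) two_ne_zero).1 hsq

lemma norm_rankOne_self_sub_rankOne_self_le {a b : E} (ha : ‖a‖ ≤ 1) (hb : ‖b‖ ≤ 1) :
    ‖rankOne ℝ a a - rankOne ℝ b b‖ ≤ 2 * ‖a - b‖ := by
  have hsplit : rankOne ℝ a a - rankOne ℝ b b = rankOne ℝ a (a - b) + rankOne ℝ (a - b) b := by
    simp only [map_sub, sub_apply]
    abel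
  rw [hsplit]
  refine (norm_add_le _ _).trans ?_
  rw [norm_rankOne, norm_rankOne]
  nlinarith [norm_nonneg (a - b)]

variable {ι : Type*} [Fintype ι]

lemma norm_sum_smul_le_sum_abs {u : ι → E} (hu : ∀ i, ‖u i‖ ≤ 1) (w : ι → ℝ) :
    ‖∑ i, w i • u i‖ ≤ ∑ i, |w i| :=
  (norm_sum_le _ _).trans <| sum_le_sum fun i _ => by
    rw [norm_smul, Real.norm_eq_abs]
    exact mul_le_of_le_one_right (abs_nonneg _) (hu i)

/-- The Hessian of `μ log ∑ᵢ exp (fᵢ / μ)` at a point where the `fᵢ` have Hessians `A i` and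
gradients `u i`, and the softmax weights are `w`. -/
noncomputable def logSumExpHessian (μ : ℝ) (A : ι → E →L[ℝ] E) (u : ι → E) (w : ι → ℝ) :
    E →L[ℝ] E :=
  ∑ i, (w i • A i + (μ⁻¹ * w i) • rankOne ℝ (u i) (u i))
    - μ⁻¹ • rankOne ℝ (∑ i, w i • u i) (∑ i, w i • u i)

variable {μ : ℝ} {A : ι → E →L[ℝ] E} {u : ι → E}

lemma logSumExpHessian_ite [DecidableEq ι] (s : Finset ι) (w : ι → ℝ) :
    logSumExpHessian μ A u (fun i => if i ∈ s then w i else 0)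
      = ∑ i ∈ s, (w i • A i + (μ⁻¹ * w i) • rankOne ℝ (u i) (u i))
        - μ⁻¹ • rankOne ℝ (∑ i ∈ s, w i • u i) (∑ i ∈ s, w i • u i) := by
  simp [logSumExpHessian, ite_smul, mul_ite, ite_add_ite, sum_ite_mem]

lemma norm_logSumExpHessian_sub_le {K : ℝ} (hμ : 0 ≤ μ) (hA : ∀ i, ‖A i‖ ≤ K)
    (hu : ∀ i, ‖u i‖ ≤ 1) {w w' : ι → ℝ} (hw : ∀ i, 0 ≤ w i) (hw1 : ∑ i, w i = 1)
    (hw' : ∀ i, 0 ≤ w' i) (hw'1 : ∑ i, w' i = 1) :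
    ‖logSumExpHessian μ A u w - logSumExpHessian μ A u w'‖
      ≤ (K + 3 * μ⁻¹) * ∑ i, |w i - w' i| := by
  set δ := ∑ i, |w i - w' i|
  set g := ∑ i, w i • u i
  set g' := ∑ i, w' i • u i
  have hg : ‖g‖ ≤ 1 := by
    simpa [abs_of_nonneg (hw _), hw1] using norm_sum_smul_le_sum_abs hu w
  have hg' : ‖g'‖ ≤ 1 := by
    simpa [abs_of_nonneg (hw' _), hw'1] using norm_sum_smul_le_sum_abs hu w'
  have hgg' : ‖g - g'‖ ≤ δ := by
    simpa [g, g', ← sum_sub_distrib, ← sub_smul] using norm_sum_smul_le_sum_abs hu (w - w')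
  have hdecomp : logSumExpHessian μ A u w - logSumExpHessian μ A u w'
      = ∑ i, (w i - w' i) • (A i + μ⁻¹ • rankOne ℝ (u i) (u i))
        - μ⁻¹ • (rankOne ℝ g g - rankOne ℝ g' g') := by
    rw [logSumExpHessian, logSumExpHessian, sub_sub_sub_comm, ← sum_sub_distrib, ← smul_sub]
    congr 1
    refine sum_congr rfl fun i _ => ?_
    module
  have hterms : ‖∑ i, (w i - w' i) • (A i + μ⁻¹ • rankOne ℝ (u i) (u i))‖ ≤ (K + μ⁻¹) * δ := by
    refine (norm_sum_le _ _).trans ?_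
    rw [mul_sum]
    refine sum_le_sum fun i _ => ?_
    rw [norm_smul, Real.norm_eq_abs, mul_comm]
    refine mul_le_mul_of_nonneg_right ((norm_add_le _ _).trans (add_le_add (hA i) ?_))
      (abs_nonneg _)
    rw [norm_smul, norm_rankOne, Real.norm_eq_abs, abs_of_nonneg (inv_nonneg.2 hμ)]
    exact mul_le_of_le_one_right (inv_nonneg.2 hμ)
      (mul_le_one₀ (hu i) (norm_nonneg _) (hu i))
  have hmean : ‖μ⁻¹ • (rankOne ℝ g g - rankOne ℝ g' g')‖ ≤ μ⁻¹ * (2 * δ) := by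
    rw [norm_smul, Real.norm_eq_abs, abs_of_nonneg (inv_nonneg.2 hμ)]
    exact mul_le_mul_of_nonneg_left
      ((norm_rankOne_self_sub_rankOne_self_le hg hg').trans (by linarith)) (inv_nonneg.2 hμ)
  rw [hdecomp]
  calc _ ≤ (K + μ⁻¹) * δ + μ⁻¹ * (2 * δ) := (norm_sub_le _ _).trans (add_le_add hterms hmean)
    _ = (K + 3 * μ⁻¹) * δ := by ring

end LogSumExpHessian

lemma Matrix.toEuclideanCLM_vecMulVec {ι : Type*} [Fintype ι] [DecidableEq ι]
    (a b : EuclideanSpace ℝ ι) :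
    Matrix.toEuclideanCLM (𝕜 := ℝ) (Matrix.vecMulVec (fun j => a j) (fun j => b j))
      = rankOne ℝ a b := by
  apply ContinuousLinearMap.coe_injective
  rw [Matrix.coe_toEuclideanCLM_eq_toEuclideanLin, ← LinearEquiv.eq_symm_apply]
  simpa using (symm_toEuclideanLin_rankOne (𝕜 := ℝ) a b).symm

section SmoothedMaxOfDistances

variable {n m : ℕ} (c : Fin m → EuclideanSpace ℝ (Fin n)) (r : Fin m → ℝ) {μ ε : ℝ}
  (x : EuclideanSpace ℝ (Fin n)) (i : Fin m)

lemma norm_sub_le_sebG : ‖x - c i‖ ≤ sebG c μ x i :=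
  Real.le_sqrt_of_sq_le (le_add_of_nonneg_right (sq_nonneg μ))

lemma le_sebG : μ ≤ sebG c μ x i :=
  Real.le_sqrt_of_sq_le (le_add_of_nonneg_left (sq_nonneg _))

lemma norm_sebGradI_le : ‖sebGradI c μ x i‖ ≤ 1 := by
  rw [sebGradI, norm_smul, norm_inv, Real.norm_eq_abs]
  exact inv_mul_le_one_of_le₀ ((norm_sub_le_sebG c x i).trans (le_abs_self _)) (abs_nonneg _)

lemma toEuclideanCLM_sebHessI :
    Matrix.toEuclideanCLM (𝕜 := ℝ) (sebHessI c μ x i)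
      = (sebG c μ x i)⁻¹ • (1 - rankOne ℝ (sebGradI c μ x i) (sebGradI c μ x i)) := by
  simp only [sebHessI, sebGradI, map_sub, map_smul, map_one, Matrix.toEuclideanCLM_vecMulVec,
    sub_apply, smul_apply]
  module

lemma norm_toEuclideanCLM_sebHessI_le (hμ : 0 < μ) :
    ‖Matrix.toEuclideanCLM (𝕜 := ℝ) (sebHessI c μ x i)‖ ≤ μ⁻¹ := by
  rw [toEuclideanCLM_sebHessI, norm_smul, norm_inv, Real.norm_eq_abs,
    abs_of_pos (hμ.trans_le (le_sebG c x i))]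
  exact (mul_le_of_le_one_right (inv_nonneg.2 (hμ.le.trans (le_sebG c x i)))
    (norm_one_sub_rankOne_self_le (norm_sebGradI_le c x i))).trans (inv_anti₀ hμ (le_sebG c x i))

lemma sebLam_eq_condWeights :
    sebLam c r μ x = condWeights (fun j => exp (sebFi c r μ x j / μ)) univ :=
  funext fun i => (condWeights_of_mem (a := fun j => exp (sebFi c r μ x j / μ)) (mem_univ i)).symm

lemma sum_sebLam (hm : 1 ≤ m) : ∑ i, sebLam c r μ x i = 1 := by
  have : Nonempty (Fin m) := ⟨⟨0, hm⟩⟩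
  rw [sebLam_eq_condWeights]
  exact sum_condWeights (sum_pos (fun i _ => exp_pos _) univ_nonempty).ne'

lemma sebS_nonempty (hm : 1 ≤ m) (hε : ε ≤ 1 / m) : (sebS c r μ ε x).Nonempty := by
  have : Nonempty (Fin m) := ⟨⟨0, hm⟩⟩
  obtain ⟨i, -, hi⟩ := exists_le_of_sum_le (f := fun _ => (1 : ℝ) / m) (g := sebLam c r μ x)
    univ_nonempty <| by
    rw [sum_sebLam c r x hm, sum_const, card_univ, Fintype.card_fin, nsmul_eq_mul,
      mul_one_div_cancel (by positivity)]
  exact ⟨i, mem_filter.2 ⟨mem_univ i, hε.trans hi⟩⟩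

lemma sum_compl_sebS_sebLam_le (hε : 0 ≤ ε) :
    ∑ i ∈ (sebS c r μ ε x)ᶜ, sebLam c r μ x i ≤ m * ε := by
  calc ∑ i ∈ (sebS c r μ ε x)ᶜ, sebLam c r μ x i ≤ (sebS c r μ ε x)ᶜ.card • ε :=
        sum_le_card_nsmul _ _ _ fun i hi => by
          simp only [sebS, compl_filter, mem_filter, not_le] at hi
          exact hi.2.le
    _ ≤ m * ε := by
        rw [nsmul_eq_mul]
        gcongr
        simpa using card_le_univ (sebS c r μ ε x)ᶜ

lemma toEuclideanCLM_sebHess :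
    Matrix.toEuclideanCLM (𝕜 := ℝ) (sebHess c r μ x)
      = logSumExpHessian μ (fun i => Matrix.toEuclideanCLM (𝕜 := ℝ) (sebHessI c μ x i))
          (sebGradI c μ x) (sebLam c r μ x) := by
  simp only [sebHess, sebGrad, logSumExpHessian, map_sub, map_sum, map_add, map_smul,
    Matrix.toEuclideanCLM_vecMulVec]

lemma toEuclideanCLM_sebHessT :
    Matrix.toEuclideanCLM (𝕜 := ℝ) (sebHessT c r μ ε x)
      = logSumExpHessian μ (fun i => Matrix.toEuclideanCLM (𝕜 := ℝ) (sebHessI c μ x i))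
          (sebGradI c μ x) (condWeights (fun j => exp (sebFi c r μ x j / μ)) (sebS c r μ ε x)) := by
  unfold condWeights
  rw [logSumExpHessian_ite]
  simp only [sebHessT, sebGradT, sebLamT, map_sub, map_sum, map_add, map_smul,
    Matrix.toEuclideanCLM_vecMulVec]

end SmoothedMaxOfDistances

theorem stmt_10_general (n m : ℕ) (hm : 1 ≤ m) (c : Fin m → EuclideanSpace ℝ (Fin n))
    (r : Fin m → ℝ) (ε₃ μ : ℝ)
    (hε₃ : 0 < ε₃) (hε₃1 : ε₃ ≤ 1) (hμ : 0 < μ) (hμ1 : μ ≤ 1)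
    (x : EuclideanSpace ℝ (Fin n)) :
    ‖Matrix.toEuclideanCLM (𝕜 := ℝ)
        (sebHess c r μ x - sebHessT c r μ (μ * ε₃ / (10 * m)) x)‖ ≤ 4 * ε₃ / 5 := by
  set ε := μ * ε₃ / (10 * m)
  set S := sebS c r μ ε x
  have hm' : (0 : ℝ) < m := by exact_mod_cast hm
  have hε_le : ε ≤ 1 / m := by
    rw [div_le_div_iff₀ (by positivity) hm']
    nlinarith [mul_le_one₀ hμ1 hε₃.le hε₃1]
  have ha : ∀ i, 0 ≤ exp (sebFi c r μ x i / μ) := fun i => (exp_pos _).le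
  have hS : 0 < ∑ j ∈ S, exp (sebFi c r μ x j / μ) :=
    sum_pos (fun i _ => exp_pos _) (sebS_nonempty c r x hm hε_le)
  have htail : ∑ i ∈ Sᶜ, sebLam c r μ x i ≤ μ * ε₃ / 10 :=
    (sum_compl_sebS_sebLam_le c r x (by positivity)).trans_eq <| by
      simp only [ε]
      field_simp
  have hsum := sum_sebLam c r x (μ := μ) hm
  rw [map_sub, toEuclideanCLM_sebHess, toEuclideanCLM_sebHessT]
  rw [sebLam_eq_condWeights] at htail hsum ⊢
  calc _ ≤ (μ⁻¹ + 3 * μ⁻¹) * ∑ i, |condWeights _ univ i - condWeights _ S i| :=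
        norm_logSumExpHessian_sub_le hμ.le (norm_toEuclideanCLM_sebHessI_le c x · hμ)
          (norm_sebGradI_le c x) (condWeights_nonneg ha univ) hsum (condWeights_nonneg ha S)
          (sum_condWeights hS.ne')
    _ = 8 * μ⁻¹ * ∑ i ∈ Sᶜ, condWeights _ univ i := by
        rw [sum_abs_condWeights_univ_sub ha hS]
        ring
    _ ≤ 8 * μ⁻¹ * (μ * ε₃ / 10) := by gcongr
    _ = 4 * ε₃ / 5 := by
        field_simp
        ring

theorem stmt_10 (n m : ℕ) (hm : 1 ≤ m) (c : Fin m → EuclideanSpace ℝ (Fin n))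
    (r : Fin m → ℝ) (hr : ∀ i, 0 ≤ r i) (ε₃ μ : ℝ)
    (hε₃ : 0 < ε₃) (hε₃1 : ε₃ ≤ 1) (hμ : 0 < μ) (hμ1 : μ ≤ 1)
    (x : EuclideanSpace ℝ (Fin n)) :
    ‖Matrix.toEuclideanCLM (𝕜 := ℝ)
        (sebHess c r μ x - sebHessT c r μ (μ * ε₃ / (10 * m)) x)‖ ≤ 4 * ε₃ / 5 :=
  stmt_10_general n m hm c r ε₃ μ hε₃ hε₃1 hμ hμ1 x
end

section
/- For every μ > 0 there exists a unique x ∈ ℝ^n minimizing the log-exponential aggregation function f(·;μ) over ℝ^n, i.e., there is exactly one x with f(x;μ) ≤ f(y;μ) for all y ∈ ℝ^n. -/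
open Real Filter

/-
Each `f_i(·;μ)` is strictly convex: `√(‖x - c_i‖² + μ²)` is the Euclidean norm of the lifted point
`(x - c_i, μ) ∈ ℝⁿ × ℝ`, and since `μ ≠ 0` the lifts of two distinct points never lie on a common
ray, so the triangle inequality is strict. Log-sum-exp is convex and strictly increasing in each
argument, hence `f(·;μ)` is strictly convex. It also dominates `‖x - c_i‖ + r_i`, so it is coercive;
being convex on a finite-dimensional space it is continuous, so it attains its minimum, and strict
convexity makes the minimizer unique.
-/

open Set

theorem strictConvexOn_sqrt_norm_sq_add_sq {E : Type*} [NormedAddCommGroup E]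
    [InnerProductSpace ℝ E] {μ : ℝ} (hμ : μ ≠ 0) :
    StrictConvexOn ℝ univ (fun x : E => √(‖x‖ ^ 2 + μ ^ 2)) := by
  let lift : E → WithLp 2 (E × ℝ) := fun x => WithLp.toLp 2 (x, μ)
  have norm_lift (x : E) : ‖lift x‖ = √(‖x‖ ^ 2 + μ ^ 2) := by
    simp [lift, WithLp.prod_norm_eq_of_L2]
  refine ⟨convex_univ, fun x _ y _ hxy a b ha hb hab => ?_⟩
  have hcombo : lift (a • x + b • y) = a • lift x + b • lift y := by
    simp [lift, ← WithLp.toLp_smul, ← WithLp.toLp_add, ← add_mul, hab]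
  have smul_lift_ne_zero {c : ℝ} (hc : 0 < c) (z : E) : c • lift z ≠ 0 := fun h => by
    simpa [lift, hμ, hc.ne'] using congrArg (fun p => (WithLp.ofLp p).2) h
  have hray : ¬SameRay ℝ (a • lift x) (b • lift y) := by
    intro h
    obtain ⟨s, t, hs, ht, hst⟩ :=
      h.exists_pos (smul_lift_ne_zero ha x) (smul_lift_ne_zero hb y)
    have hfst := congrArg (fun p => (WithLp.ofLp p).1) hst
    have hsnd := congrArg (fun p => (WithLp.ofLp p).2) hst
    simp only [lift, WithLp.ofLp_smul, Prod.smul_fst, Prod.smul_snd, smul_eq_mul, smul_smul]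
      at hfst hsnd
    have hscale : s * a = t * b := mul_right_cancel₀ hμ (by linarith)
    rw [hscale] at hfst
    exact hxy (smul_right_injective E (by positivity) hfst)
  simp only [← norm_lift, hcombo, smul_eq_mul]
  calc ‖a • lift x + b • lift y‖ < ‖a • lift x‖ + ‖b • lift y‖ :=
        norm_add_lt_of_not_sameRay hray
    _ = a * ‖lift x‖ + b * ‖lift y‖ := by simp [norm_smul, abs_of_pos, ha, hb]

section LogSumExp

variable {ι : Type*} [Fintype ι] [Nonempty ι]

theorem sum_exp_pos (v : ι → ℝ) : 0 < ∑ i, exp (v i) :=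
  Finset.sum_pos (fun _ _ => exp_pos _) Finset.univ_nonempty

theorem convexOn_log_sum_exp :
    ConvexOn ℝ univ (fun v : ι → ℝ => log (∑ i, exp (v i))) := by
  refine ⟨convex_univ, fun u _ v _ a b ha hb hab => ?_⟩
  set A := ∑ i, exp (u i)
  set B := ∑ i, exp (v i)
  have hA : 0 < A := sum_exp_pos u
  have hB : 0 < B := sum_exp_pos v
  -- normalize `u` and `v` so that their exponentials sum to one, then apply convexity of `exp`
  have hterm (i : ι) : exp ((a • u + b • v) i) ≤
      (a * (exp (u i) / A) + b * (exp (v i) / B)) * exp (a * log A + b * log B) := by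
    have := convexOn_exp.2 (mem_univ (u i - log A)) (mem_univ (v i - log B)) ha hb hab
    simp only [smul_eq_mul, exp_sub, exp_log hA, exp_log hB] at this
    calc exp ((a • u + b • v) i)
        = exp (a * (u i - log A) + b * (v i - log B)) * exp (a * log A + b * log B) := by
          rw [← exp_add]; congr 1; simp only [Pi.add_apply, Pi.smul_apply, smul_eq_mul]; ring
      _ ≤ _ := mul_le_mul_of_nonneg_right this (exp_pos _).le
  have hsum : ∑ i, exp ((a • u + b • v) i) ≤ exp (a * log A + b * log B) := by
    calc ∑ i, exp ((a • u + b • v) i)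
        ≤ ∑ i, (a * (exp (u i) / A) + b * (exp (v i) / B)) * exp (a * log A + b * log B) :=
          Finset.sum_le_sum fun i _ => hterm i
      _ = exp (a * log A + b * log B) := by
          rw [← Finset.sum_mul, Finset.sum_add_distrib, ← Finset.mul_sum, ← Finset.mul_sum,
            ← Finset.sum_div, ← Finset.sum_div, div_self hA.ne', div_self hB.ne', mul_one,
            mul_one, hab, one_mul]
  simpa only [smul_eq_mul] using (log_le_iff_le_exp (sum_exp_pos _)).2 hsum

theorem strictConvexOn_mul_log_sum_exp_div {E : Type*} [AddCommGroup E] [Module ℝ E]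
    {s : Set E} {f : ι → E → ℝ} (hf : ∀ i, StrictConvexOn ℝ s (f i)) {μ : ℝ} (hμ : 0 < μ) :
    StrictConvexOn ℝ s (fun x => μ * log (∑ i, exp (f i x / μ))) := by
  refine ⟨(hf (Classical.arbitrary ι)).1, fun x hx y hy hxy a b ha hb hab => ?_⟩
  have hlt : ∑ i, exp (f i (a • x + b • y) / μ) <
      ∑ i, exp ((a • (f · x / μ) + b • (f · y / μ)) i) := by
    refine Finset.sum_lt_sum_of_nonempty Finset.univ_nonempty fun i _ => exp_lt_exp.2 ?_
    have := (hf i).2 hx hy hxy ha hb hab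
    simp only [Pi.add_apply, Pi.smul_apply, smul_eq_mul] at this ⊢
    rw [div_lt_iff₀ hμ]
    calc f i (a • x + b • y) < a * f i x + b * f i y := this
      _ = _ := by field_simp
  have hle :=
    convexOn_log_sum_exp.2 (mem_univ (f · x / μ)) (mem_univ (f · y / μ)) ha.le hb.le hab
  have hlog := (log_lt_log (sum_exp_pos _) hlt).trans_le hle
  simp only [smul_eq_mul] at hlog ⊢
  calc μ * log (∑ i, exp (f i (a • x + b • y) / μ))
      < μ * (a * log (∑ i, exp (f i x / μ)) + b * log (∑ i, exp (f i y / μ))) :=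
        mul_lt_mul_of_pos_left hlog hμ
    _ = _ := by ring

theorem le_mul_log_sum_exp_div (v : ι → ℝ) {μ : ℝ} (hμ : 0 < μ) (j : ι) :
    v j ≤ μ * log (∑ i, exp (v i / μ)) := by
  have hexp : exp (v j / μ) ≤ ∑ i, exp (v i / μ) :=
    Finset.single_le_sum (f := fun i => exp (v i / μ)) (fun i _ => (exp_pos _).le)
      (Finset.mem_univ j)
  have := (le_log_iff_exp_le (sum_exp_pos _)).2 hexp
  rwa [div_le_iff₀ hμ, mul_comm] at this

end LogSumExp

theorem StrictConvexOn.existsUnique_forall_le {E : Type*} [NormedAddCommGroup E]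
    [NormedSpace ℝ E] [FiniteDimensional ℝ E] {f : E → ℝ} (hf : StrictConvexOn ℝ univ f)
    (hlim : Tendsto f (cocompact E) atTop) : ∃! x, ∀ y, f x ≤ f y := by
  have hcont : Continuous f := continuousOn_univ.1 (hf.convexOn.continuousOn isOpen_univ)
  obtain ⟨x, hx⟩ := hcont.exists_forall_le hlim
  exact ⟨x, hx, fun y hy => hf.eq_of_isMinOn (fun z _ => hy z) (fun z _ => hx z)
    (mem_univ y) (mem_univ x)⟩

section Aggregation

variable {n m : ℕ} [NeZero m] (c : Fin m → EuclideanSpace ℝ (Fin n)) (r : Fin m → ℝ) {μ : ℝ}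

theorem strictConvexOn_sebFmu (hμ : 0 < μ) : StrictConvexOn ℝ univ (sebFmu c r μ) := by
  refine strictConvexOn_mul_log_sum_exp_div (fun i => ?_) hμ
  have := ((strictConvexOn_sqrt_norm_sq_add_sq hμ.ne').translate_right (-c i)).add_const (r i)
  refine this.congr fun x _ => ?_
  simp [sebFi, sebG, neg_add_eq_sub]

theorem tendsto_sebFmu_cocompact (hμ : 0 < μ) :
    Tendsto (sebFmu c r μ) (cocompact _) atTop := by
  let i₀ : Fin m := 0
  refine tendsto_atTop_mono (fun x => ?_) <|
    tendsto_atTop_add_const_right _ (r i₀ - ‖c i₀‖) tendsto_norm_cocompact_atTop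
  have hg : ‖x - c i₀‖ ≤ sebG c μ x i₀ :=
    le_sqrt_of_sq_le (le_add_of_nonneg_right (sq_nonneg μ))
  have hfi : ‖x‖ + (r i₀ - ‖c i₀‖) ≤ sebFi c r μ x i₀ := by
    linarith [norm_sub_norm_le x (c i₀), show sebFi c r μ x i₀ = sebG c μ x i₀ + r i₀ from rfl]
  exact hfi.trans (le_mul_log_sum_exp_div _ hμ i₀)

end Aggregation

theorem stmt_18_general (n m : ℕ) (hm : 1 ≤ m) (c : Fin m → EuclideanSpace ℝ (Fin n))
    (r : Fin m → ℝ) (μ : ℝ) (hμ : 0 < μ) :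
    ∃! x : EuclideanSpace ℝ (Fin n), ∀ y, sebFmu c r μ x ≤ sebFmu c r μ y := by
  have : NeZero m := ⟨by omega⟩
  exact (strictConvexOn_sebFmu c r hμ).existsUnique_forall_le
    (tendsto_sebFmu_cocompact c r hμ)

theorem stmt_18 (n m : ℕ) (hm : 1 ≤ m) (c : Fin m → EuclideanSpace ℝ (Fin n))
    (r : Fin m → ℝ) (hr : ∀ i, 0 ≤ r i) (μ : ℝ) (hμ : 0 < μ) :
    ∃! x : EuclideanSpace ℝ (Fin n), ∀ y, sebFmu c r μ x ≤ sebFmu c r μ y :=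
  stmt_18_general n m hm c r μ hμ
end
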